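/- (Total-variation performance-difference bound.) Suppose 0 ≤ r(s,a) ≤ R_max for all s ∈ S and a ∈ A. Then for any two policies π₁ and π₂ and any initial distribution μ, |J(π₁) − J(π₂)| ≤ (R_max/(1−γ)²) · E_{s ~ ν^{π₁,μ}}[ ‖π₁(s) − π₂(s)‖₁ ]. -/

import Mathlib

open scoped BigOperators

section MDPDefs

variable {S A : Type*} [Fintype S] [Fintype A]

/-- Expectation of a real-valued function under a PMF on a finite type (a finite sum). -/
noncomputable def pmfExp {X : Type*} [Fintype X] (p : PMF X) (f : X → ℝ) : ℝ :=
  ∑ x, (p x).toReal * f x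

/-- Time-`t` state distribution `d_t^{π,μ}`:
`d_0 = μ` and `d_{t+1}` is obtained by sampling `x ~ d_t`, `a ~ π x`, `s' ~ P x a`. -/
noncomputable def stateDist (P : S → A → PMF S) (π : S → PMF A) (μ : PMF S) : ℕ → PMF S
  | 0 => μ
  | t + 1 => (stateDist P π μ t).bind fun x => (π x).bind fun a => P x a

/-- State value function `V^π(s) = Σ_t γ^t E_{x ~ d_t^{π, δ_s}} E_{a ~ π x}[r x a]`. -/
noncomputable def Vval (P : S → A → PMF S) (r : S → A → ℝ) (γ : ℝ) (π : S → PMF A) (s : S) : ℝ :=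
  ∑' t : ℕ, γ ^ t * pmfExp (stateDist P π (PMF.pure s) t) fun x => pmfExp (π x) fun a => r x a

/-- Return from an initial distribution: `J(π) = E_{s~μ}[V^π(s)]`. -/
noncomputable def Jret (P : S → A → PMF S) (r : S → A → ℝ) (γ : ℝ) (π : S → PMF A) (μ : PMF S) : ℝ :=
  pmfExp μ (Vval P r γ π)

/-- State-action value `Q^π(s,a) = r(s,a) + γ E_{s' ~ P s a}[V^π(s')]`. -/
noncomputable def Qval (P : S → A → PMF S) (r : S → A → ℝ) (γ : ℝ) (π : S → PMF A)
    (s : S) (a : A) : ℝ :=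
  r s a + γ * pmfExp (P s a) (Vval P r γ π)

/-- Advantage `A^π(s,a) = Q^π(s,a) - V^π(s)`. -/
noncomputable def Adv (P : S → A → PMF S) (r : S → A → ℝ) (γ : ℝ) (π : S → PMF A)
    (s : S) (a : A) : ℝ :=
  Qval P r γ π s a - Vval P r γ π s

/-- Discounted state-visitation distribution `ν^{π,μ}(s) = (1-γ) Σ_t γ^t d_t^{π,μ}(s)`. -/
noncomputable def visit (P : S → A → PMF S) (π : S → PMF A) (μ : PMF S) (γ : ℝ) (s : S) : ℝ :=
  (1 - γ) * ∑' t : ℕ, γ ^ t * (stateDist P π μ t s).toReal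

/-- `ℓ¹` distance between two PMFs on a finite type. -/
noncomputable def l1Dist {X : Type*} [Fintype X] (p q : PMF X) : ℝ :=
  ∑ x, |(p x).toReal - (q x).toReal|

/-- KL divergence `D_KL(p‖q) = Σ_{x : p x > 0} p x * log (p x / q x)` on a finite type. -/
noncomputable def pmfKL {X : Type*} [Fintype X] (p q : PMF X) : ℝ :=
  ∑ x, if p x = 0 then 0 else (p x).toReal * Real.log ((p x).toReal / (q x).toReal)

/-- Mixed behavior policy: teacher's action when the intervention indicator is on,
student's action otherwise. -/
noncomputable def mixPolicy {S A : Type*} (πt πs : S → PMF A) (T : S → Bool) (s : S) : PMF A :=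
  if T s then πt s else πs s

/-- Finite-horizon value of a deterministic policy, defined recursively:
`V_0(s) = r s (σ s)` and `V_{k+1}(s) = r s (σ s) + γ E_{s' ~ P s (σ s)}[V_k s']`. -/
noncomputable def Vfin (P : S → A → PMF S) (r : S → A → ℝ) (γ : ℝ) (σ : S → A) : ℕ → S → ℝ
  | 0, s => r s (σ s)
  | k + 1, s => r s (σ s) + γ * pmfExp (P s (σ s)) (Vfin P r γ σ k)

/-- Finite-horizon value of the switching (mixed) policy that at each step picks whichever of
the two deterministic policies gives the larger continuation value. -/
noncomputable def Wswitch (P : S → A → PMF S) (r : S → A → ℝ) (γ : ℝ)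
    (πt πs : S → A) : ℕ → S → ℝ
  | 0, s => max (r s (πt s)) (r s (πs s))
  | k + 1, s =>
      max (r s (πt s) + γ * pmfExp (P s (πt s)) (Wswitch P r γ πt πs k))
          (r s (πs s) + γ * pmfExp (P s (πs s)) (Wswitch P r γ πt πs k))

end MDPDefs

/-!
Let `ε t = E_{s ~ d_t^{π₁}} ‖π₁(s) − π₂(s)‖₁` and `δ t = ‖d_t^{π₁} − d_t^{π₂}‖₁`. Coupling one step
of the two chains gives `δ 0 = 0` and `δ (t + 1) ≤ ε t + δ t`, and the expected rewards at time `t`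
differ by at most `R_max (ε t + δ t)`. Shifting the discounted series of `δ` by one step turns the
recursion into `∑ γ^t δ t ≤ γ/(1-γ) ∑ γ^t ε t`, hence `|J(π₁) − J(π₂)| ≤ R_max/(1-γ) ∑ γ^t ε t`,
and `(1-γ) ∑ γ^t ε t` is exactly the visitation average of `‖π₁ − π₂‖₁`.
-/

open Finset

lemma PMF.sum_toReal_eq_one {X : Type*} [Fintype X] (p : PMF X) : ∑ x, (p x).toReal = 1 := by
  rw [← ENNReal.toReal_sum fun x _ => p.apply_ne_top x,
    ← tsum_fintype (L := SummationFilter.unconditional _), p.tsum_coe, ENNReal.toReal_one]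

lemma PMF.toReal_apply_le_one {X : Type*} (p : PMF X) (x : X) : (p x).toReal ≤ 1 :=
  ENNReal.toReal_le_of_le_ofReal zero_le_one (by simpa using p.coe_le_one x)

lemma PMF.toReal_bind_apply {X Y : Type*} [Fintype X] (p : PMF X) (g : X → PMF Y) (y : Y) :
    (p.bind g y).toReal = ∑ x, (p x).toReal * (g x y).toReal := by
  rw [PMF.bind_apply, tsum_fintype,
    ENNReal.toReal_sum fun x _ => ENNReal.mul_ne_top (p.apply_ne_top x) ((g x).apply_ne_top y)]
  simp only [ENNReal.toReal_mul]

section Expectation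

variable {X : Type*} [Fintype X] (p : PMF X)

lemma pmfExp_const (c : ℝ) : pmfExp p (fun _ => c) = c := by
  simp [pmfExp, ← sum_mul, p.sum_toReal_eq_one]

lemma pmfExp_const_mul (c : ℝ) (f : X → ℝ) : pmfExp p (fun x => c * f x) = c * pmfExp p f := by
  simp only [pmfExp, mul_sum, mul_left_comm]

lemma pmfExp_sub (f g : X → ℝ) : pmfExp p (fun x => f x - g x) = pmfExp p f - pmfExp p g := by
  simp only [pmfExp, mul_sub, sum_sub_distrib]

lemma pmfExp_mono {f g : X → ℝ} (h : ∀ x, f x ≤ g x) : pmfExp p f ≤ pmfExp p g :=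
  sum_le_sum fun x _ => mul_le_mul_of_nonneg_left (h x) ENNReal.toReal_nonneg

lemma abs_pmfExp_le_pmfExp_abs (f : X → ℝ) : |pmfExp p f| ≤ pmfExp p fun x => |f x| :=
  (abs_sum_le_sum_abs _ _).trans_eq <| sum_congr rfl fun x _ => by
    rw [abs_mul, abs_of_nonneg ENNReal.toReal_nonneg]

lemma abs_pmfExp_le {f : X → ℝ} {C : ℝ} (h : ∀ x, |f x| ≤ C) : |pmfExp p f| ≤ C :=
  calc |pmfExp p f| ≤ pmfExp p fun x => |f x| := abs_pmfExp_le_pmfExp_abs p f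
    _ ≤ pmfExp p fun _ => C := pmfExp_mono p h
    _ = C := pmfExp_const p C

lemma pmfExp_bind {Y : Type*} [Fintype Y] (g : X → PMF Y) (f : Y → ℝ) :
    pmfExp (p.bind g) f = pmfExp p fun x => pmfExp (g x) f := by
  simp only [pmfExp, PMF.toReal_bind_apply, sum_mul, mul_sum, mul_assoc]
  exact sum_comm

lemma pmfExp_tsum {h : X → ℕ → ℝ} (hs : ∀ x, Summable (h x)) :
    pmfExp p (fun x => ∑' t, h x t) = ∑' t, pmfExp p fun x => h x t := by
  simp only [pmfExp, ← tsum_mul_left]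
  exact (Summable.tsum_finsetSum fun x _ => (hs x).mul_left _).symm

end Expectation

section L1

variable {X Y : Type*} [Fintype X] [Fintype Y]

lemma l1Dist_nonneg (p q : PMF X) : 0 ≤ l1Dist p q :=
  sum_nonneg fun _ _ => abs_nonneg _

lemma l1Dist_self (p : PMF X) : l1Dist p p = 0 := by
  simp [l1Dist]

lemma l1Dist_le_two (p q : PMF X) : l1Dist p q ≤ 2 :=
  calc l1Dist p q ≤ ∑ x, ((p x).toReal + (q x).toReal) :=
        sum_le_sum fun x _ => (abs_sub _ _).trans_eq <| by
          rw [abs_of_nonneg ENNReal.toReal_nonneg, abs_of_nonneg ENNReal.toReal_nonneg]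
    _ = 2 := by rw [sum_add_distrib, p.sum_toReal_eq_one, q.sum_toReal_eq_one]; norm_num

lemma abs_l1Dist_le_two (p q : PMF X) : |l1Dist p q| ≤ 2 := by
  rw [abs_of_nonneg (l1Dist_nonneg p q)]
  exact l1Dist_le_two p q

lemma abs_pmfExp_sub_pmfExp_le (p q : PMF X) {f : X → ℝ} {C : ℝ} (hf : ∀ x, |f x| ≤ C) :
    |pmfExp p f - pmfExp q f| ≤ C * l1Dist p q := by
  rw [pmfExp, pmfExp, ← sum_sub_distrib, l1Dist, mul_sum]
  refine (abs_sum_le_sum_abs _ _).trans (sum_le_sum fun x _ => ?_)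
  rw [← sub_mul, abs_mul, mul_comm]
  exact mul_le_mul_of_nonneg_right (hf x) (abs_nonneg _)

lemma l1Dist_bind_le (p q : PMF X) (f g : X → PMF Y) :
    l1Dist (p.bind f) (q.bind g) ≤ pmfExp p (fun x => l1Dist (f x) (g x)) + l1Dist p q := by
  have pointwise : ∀ y, |(p.bind f y).toReal - (q.bind g y).toReal| ≤
      ∑ x, ((p x).toReal * |(f x y).toReal - (g x y).toReal| +
        |(p x).toReal - (q x).toReal| * (g x y).toReal) := fun y => by
    rw [PMF.toReal_bind_apply, PMF.toReal_bind_apply, ← sum_sub_distrib]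
    refine (abs_sum_le_sum_abs _ _).trans (sum_le_sum fun x _ => ?_)
    calc |(p x).toReal * (f x y).toReal - (q x).toReal * (g x y).toReal|
        = |(p x).toReal * ((f x y).toReal - (g x y).toReal) +
            ((p x).toReal - (q x).toReal) * (g x y).toReal| := by ring_nf
      _ ≤ _ := by
        refine (abs_add_le _ _).trans_eq ?_
        rw [abs_mul, abs_mul, abs_of_nonneg (ENNReal.toReal_nonneg (a := p x)),
          abs_of_nonneg (ENNReal.toReal_nonneg (a := g x y))]
  calc l1Dist (p.bind f) (q.bind g)
      ≤ ∑ y, ∑ x, ((p x).toReal * |(f x y).toReal - (g x y).toReal| +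
          |(p x).toReal - (q x).toReal| * (g x y).toReal) := sum_le_sum fun y _ => pointwise y
    _ = pmfExp p (fun x => l1Dist (f x) (g x)) + l1Dist p q := by
      rw [sum_comm]
      simp only [sum_add_distrib, ← mul_sum, PMF.sum_toReal_eq_one, mul_one]
      rfl

end L1

lemma summable_pow_mul_of_abs_le {γ : ℝ} (hγ0 : 0 ≤ γ) (hγ1 : γ < 1) {c : ℕ → ℝ} {C : ℝ}
    (h : ∀ t, |c t| ≤ C) : Summable fun t => γ ^ t * c t :=
  Summable.of_norm_bounded ((summable_geometric_of_lt_one hγ0 hγ1).mul_right C) fun t => by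
    rw [norm_mul, norm_pow, Real.norm_of_nonneg hγ0, Real.norm_eq_abs]
    exact mul_le_mul_of_nonneg_left (h t) (pow_nonneg hγ0 t)

lemma tsum_pow_mul_add_le_of_succ_le {γ : ℝ} (hγ0 : 0 ≤ γ) (hγ1 : γ < 1) {ε δ : ℕ → ℝ}
    (hε : Summable fun t => γ ^ t * ε t) (hδ : Summable fun t => γ ^ t * δ t) (h0 : δ 0 = 0)
    (hstep : ∀ t, δ (t + 1) ≤ ε t + δ t) :
    ∑' t, γ ^ t * (ε t + δ t) ≤ (∑' t, γ ^ t * ε t) / (1 - γ) := by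
  have hshift : ∑' t, γ ^ t * δ t ≤ γ * ∑' t, γ ^ t * (ε t + δ t) := by
    rw [hδ.tsum_eq_zero_add, h0, mul_zero, zero_add, ← tsum_mul_left]
    refine Summable.tsum_le_tsum (fun t => ?_) ((summable_nat_add_iff 1).mpr hδ)
      ((hε.add hδ).mul_left γ |>.congr fun t => by ring)
    rw [pow_succ, mul_comm _ γ, mul_assoc]
    exact mul_le_mul_of_nonneg_left (mul_le_mul_of_nonneg_left (hstep t) (pow_nonneg hγ0 t)) hγ0
  rw [le_div_iff₀ (sub_pos.mpr hγ1)]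
  simp only [mul_add] at hshift ⊢
  rw [hε.tsum_add hδ] at hshift ⊢
  linarith

section MDP

variable {S A : Type*}

lemma stateDist_eq_bind_pure (P : S → A → PMF S) (π : S → PMF A) (μ : PMF S) (t : ℕ) :
    stateDist P π μ t = μ.bind fun s => stateDist P π (PMF.pure s) t := by
  induction t with
  | zero => simp [stateDist]
  | succ t ih => rw [stateDist, ih, PMF.bind_bind]; rfl

section Reward

variable [Fintype A]

noncomputable def expectedReward (r : S → A → ℝ) (π : S → PMF A) (s : S) : ℝ :=
  pmfExp (π s) (r s)

lemma abs_expectedReward_le {r : S → A → ℝ} {C : ℝ} (hr : ∀ s a, |r s a| ≤ C)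
    (π : S → PMF A) (s : S) : |expectedReward r π s| ≤ C :=
  abs_pmfExp_le _ (hr s)

lemma abs_expectedReward_sub_le {r : S → A → ℝ} {C : ℝ} (hr : ∀ s a, |r s a| ≤ C)
    (π₁ π₂ : S → PMF A) (s : S) :
    |expectedReward r π₁ s - expectedReward r π₂ s| ≤ C * l1Dist (π₁ s) (π₂ s) :=
  abs_pmfExp_sub_pmfExp_le _ _ (hr s)

end Reward

variable [Fintype S] (P : S → A → PMF S) {γ : ℝ}

lemma sum_visit_mul_eq (hγ0 : 0 ≤ γ) (hγ1 : γ < 1) (π : S → PMF A) (μ : PMF S) (f : S → ℝ) :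
    ∑ s, visit P π μ γ s * f s = (1 - γ) * ∑' t, γ ^ t * pmfExp (stateDist P π μ t) f := by
  have hd : ∀ s, Summable fun t => γ ^ t * ((stateDist P π μ t s).toReal * f s) := fun s => by
    simpa only [mul_assoc] using (summable_pow_mul_of_abs_le hγ0 hγ1 fun t => by
      rw [abs_of_nonneg ENNReal.toReal_nonneg]; exact PMF.toReal_apply_le_one _ _).mul_right (f s)
  simp only [visit, pmfExp, mul_assoc, ← mul_sum, ← tsum_mul_right]
  rw [← Summable.tsum_finsetSum fun s _ => hd s]
  simp only [mul_sum]

noncomputable def stateGap (π₁ π₂ : S → PMF A) (μ : PMF S) (t : ℕ) : ℝ :=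
  l1Dist (stateDist P π₁ μ t) (stateDist P π₂ μ t)

lemma abs_stateGap_le (π₁ π₂ : S → PMF A) (μ : PMF S) (t : ℕ) : |stateGap P π₁ π₂ μ t| ≤ 2 :=
  abs_l1Dist_le_two _ _

lemma stateGap_zero (π₁ π₂ : S → PMF A) (μ : PMF S) : stateGap P π₁ π₂ μ 0 = 0 :=
  l1Dist_self μ

variable [Fintype A]

noncomputable def policyGap (π₁ π₂ : S → PMF A) (μ : PMF S) (t : ℕ) : ℝ :=
  pmfExp (stateDist P π₁ μ t) fun s => l1Dist (π₁ s) (π₂ s)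

lemma abs_policyGap_le (π₁ π₂ : S → PMF A) (μ : PMF S) (t : ℕ) : |policyGap P π₁ π₂ μ t| ≤ 2 :=
  abs_pmfExp_le _ fun _ => abs_l1Dist_le_two _ _

lemma stateGap_succ_le (π₁ π₂ : S → PMF A) (μ : PMF S) (t : ℕ) :
    stateGap P π₁ π₂ μ (t + 1) ≤ policyGap P π₁ π₂ μ t + stateGap P π₁ π₂ μ t := by
  refine (l1Dist_bind_le _ _ _ _).trans (add_le_add_left (pmfExp_mono _ fun s => ?_) _)
  simpa [l1Dist_self, pmfExp_const] using l1Dist_bind_le (π₁ s) (π₂ s) (P s) (P s)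

lemma Jret_eq_tsum (hγ0 : 0 ≤ γ) (hγ1 : γ < 1) {r : S → A → ℝ} {C : ℝ}
    (hr : ∀ s a, |r s a| ≤ C) (π : S → PMF A) (μ : PMF S) :
    Jret P r γ π μ = ∑' t, γ ^ t * pmfExp (stateDist P π μ t) (expectedReward r π) := by
  have hV : Vval P r γ π = fun s =>
      ∑' t, γ ^ t * pmfExp (stateDist P π (PMF.pure s) t) (expectedReward r π) := rfl
  rw [Jret, hV, pmfExp_tsum μ fun s => summable_pow_mul_of_abs_le hγ0 hγ1 fun t =>
    abs_pmfExp_le _ (abs_expectedReward_le hr π)]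
  refine tsum_congr fun t => ?_
  rw [pmfExp_const_mul, stateDist_eq_bind_pure P π μ t, pmfExp_bind]

lemma abs_pmfExp_expectedReward_sub_le {r : S → A → ℝ} {C : ℝ} (hr : ∀ s a, |r s a| ≤ C)
    (π₁ π₂ : S → PMF A) (d₁ d₂ : PMF S) :
    |pmfExp d₁ (expectedReward r π₁) - pmfExp d₂ (expectedReward r π₂)| ≤
      C * (pmfExp d₁ (fun s => l1Dist (π₁ s) (π₂ s)) + l1Dist d₁ d₂) := by
  have policy_term : |pmfExp d₁ (expectedReward r π₁) - pmfExp d₁ (expectedReward r π₂)| ≤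
      C * pmfExp d₁ (fun s => l1Dist (π₁ s) (π₂ s)) := by
    rw [← pmfExp_sub, ← pmfExp_const_mul]
    exact (abs_pmfExp_le_pmfExp_abs _ _).trans
      (pmfExp_mono _ (abs_expectedReward_sub_le hr π₁ π₂))
  have state_term : |pmfExp d₁ (expectedReward r π₂) - pmfExp d₂ (expectedReward r π₂)| ≤
      C * l1Dist d₁ d₂ :=
    abs_pmfExp_sub_pmfExp_le _ _ (abs_expectedReward_le hr π₂)
  rw [mul_add]
  exact (abs_sub_le _ _ _).trans (add_le_add policy_term state_term)

lemma abs_Jret_sub_Jret_le (hγ0 : 0 ≤ γ) (hγ1 : γ < 1) {r : S → A → ℝ} {C : ℝ}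
    (hr : ∀ s a, |r s a| ≤ C) (π₁ π₂ : S → PMF A) (μ : PMF S) :
    |Jret P r γ π₁ μ - Jret P r γ π₂ μ| ≤
      C * ∑' t, γ ^ t * (policyGap P π₁ π₂ μ t + stateGap P π₁ π₂ μ t) := by
  have hJ : ∀ π, Summable fun t => γ ^ t * pmfExp (stateDist P π μ t) (expectedReward r π) :=
    fun π => summable_pow_mul_of_abs_le hγ0 hγ1 fun t =>
      abs_pmfExp_le _ (abs_expectedReward_le hr π)
  have hgap : Summable fun t => γ ^ t * (policyGap P π₁ π₂ μ t + stateGap P π₁ π₂ μ t) :=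
    summable_pow_mul_of_abs_le hγ0 hγ1 fun t => (abs_add_le _ _).trans <|
      add_le_add (abs_policyGap_le P π₁ π₂ μ t) (abs_stateGap_le P π₁ π₂ μ t)
  rw [Jret_eq_tsum P hγ0 hγ1 hr, Jret_eq_tsum P hγ0 hγ1 hr, ← (hJ π₁).tsum_sub (hJ π₂),
    ← tsum_mul_left, ← Real.norm_eq_abs]
  refine tsum_of_norm_bounded (hgap.mul_left C).hasSum fun t => ?_
  rw [Real.norm_eq_abs, ← mul_sub, abs_mul, abs_of_nonneg (pow_nonneg hγ0 t), mul_left_comm]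
  exact mul_le_mul_of_nonneg_left (abs_pmfExp_expectedReward_sub_le hr π₁ π₂ _ _)
    (pow_nonneg hγ0 t)

end MDP

theorem tv_perf_diff_bound_general {S A : Type*} [Fintype S] [Fintype A]
    (P : S → A → PMF S) (r : S → A → ℝ) (γ : ℝ) (hγ0 : 0 ≤ γ) (hγ1 : γ < 1)
    (Rmax : ℝ) (hr : ∀ (s : S) (a : A), 0 ≤ r s a ∧ r s a ≤ Rmax)
    (π₁ π₂ : S → PMF A) (μ : PMF S) :
    |Jret P r γ π₁ μ - Jret P r γ π₂ μ| ≤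
      Rmax / (1 - γ) ^ 2 *
        ∑ s, visit P π₁ μ γ s * l1Dist (π₁ s) (π₂ s) := by
  obtain ⟨s₀, -⟩ := μ.support_nonempty
  obtain ⟨a₀, -⟩ := (π₁ s₀).support_nonempty
  have hRmax : 0 ≤ Rmax := (hr s₀ a₀).1.trans (hr s₀ a₀).2
  have hr_abs : ∀ s a, |r s a| ≤ Rmax := fun s a =>
    abs_le.2 ⟨by linarith [(hr s a).1], (hr s a).2⟩
  have hε := summable_pow_mul_of_abs_le hγ0 hγ1 (abs_policyGap_le P π₁ π₂ μ)
  have hδ := summable_pow_mul_of_abs_le hγ0 hγ1 (abs_stateGap_le P π₁ π₂ μ)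
  calc |Jret P r γ π₁ μ - Jret P r γ π₂ μ|
      ≤ Rmax * ∑' t, γ ^ t * (policyGap P π₁ π₂ μ t + stateGap P π₁ π₂ μ t) :=
        abs_Jret_sub_Jret_le P hγ0 hγ1 hr_abs π₁ π₂ μ
    _ ≤ Rmax * ((∑' t, γ ^ t * policyGap P π₁ π₂ μ t) / (1 - γ)) :=
        mul_le_mul_of_nonneg_left (tsum_pow_mul_add_le_of_succ_le hγ0 hγ1 hε hδ
          (stateGap_zero P π₁ π₂ μ) (stateGap_succ_le P π₁ π₂ μ)) hRmax
    _ = Rmax / (1 - γ) ^ 2 * ∑ s, visit P π₁ μ γ s * l1Dist (π₁ s) (π₂ s) := by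
        rw [sum_visit_mul_eq P hγ0 hγ1]
        field_simp [(sub_pos.mpr hγ1).ne']
        rfl

/-- Total-variation performance-difference bound: if `0 ≤ r ≤ R_max`, then for any two
policies `π₁, π₂` and any initial distribution `μ`,
`|J(π₁) − J(π₂)| ≤ (R_max/(1−γ)²) E_{s ~ ν^{π₁,μ}}[‖π₁(s) − π₂(s)‖₁]`. -/
theorem tv_perf_diff_bound {S A : Type*} [Fintype S] [Nonempty S] [Fintype A] [Nonempty A]
    (P : S → A → PMF S) (r : S → A → ℝ) (γ : ℝ) (hγ0 : 0 ≤ γ) (hγ1 : γ < 1)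
    (Rmax : ℝ) (hr : ∀ (s : S) (a : A), 0 ≤ r s a ∧ r s a ≤ Rmax)
    (π₁ π₂ : S → PMF A) (μ : PMF S) :
    |Jret P r γ π₁ μ - Jret P r γ π₂ μ| ≤
      Rmax / (1 - γ) ^ 2 *
        ∑ s, visit P π₁ μ γ s * l1Dist (π₁ s) (π₂ s) :=
  tv_perf_diff_bound_general P r γ hγ0 hγ1 Rmax hr π₁ π₂ μ
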